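/- arXiv:2406.04243 — 4 statements merged into one kernel-verified Lean document; each statement's English description precedes it below -/
import Mathlib

section
/- If m ≥ 2 and S = {K ∈ ℝ^{m×n} : ρ(A+BK) < 1} is nonempty, then S is unbounded. -/
/-!
Moving a gain `K` along a rank-one direction `v wᵀ` adds multiples of `(B v) wᵀ` to `A + B K`. If
`w` annihilates the Krylov vectors `(A + B K)ᵏ B v`, Cayley–Hamilton shows that every eigenvalue
of the perturbed matrix is an eigenvalue of `A + B K`, so a whole line of gains stays stabilizing.
Starting from a stabilizing `K₀`, such a direction exists unless `b = B e₀` is a cyclic vector of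
`A + B K₀`. In the cyclic case a deadbeat gain `K₀ + e₀ cᵀ` makes the closed loop nilpotent; a
left null vector `w` of it and a nonzero `v` with `w ⬝ B v = 0`, which exists because `m ≥ 2`,
then give the direction.
-/

open Matrix

/-- Spectral radius of a real square matrix via its complexification. -/
noncomputable def specRad {ι : Type*} [Fintype ι] [DecidableEq ι]
    (M : Matrix ι ι ℝ) : ENNReal :=
  spectralRadius ℂ (M.map (algebraMap ℝ ℂ))

attribute [local instance] Matrix.normedAddCommGroup

attribute [local instance] Matrix.normedSpace

open Polynomial

section Field

variable {K ι : Type*} [Field K] [Fintype ι] [DecidableEq ι]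

theorem Matrix.mem_spectrum_iff_exists_vecMul_eq_smul {M : Matrix ι ι K} {μ : K} :
    μ ∈ spectrum K M ↔ ∃ z ≠ 0, z ᵥ* M = μ • z := by
  rw [spectrum.mem_iff, isUnit_iff_isUnit_det, isUnit_iff_ne_zero, not_not,
    ← exists_vecMul_eq_zero_iff]
  simp only [Algebra.algebraMap_eq_smul_one, vecMul_sub, vecMul_smul, vecMul_one, sub_eq_zero,
    eq_comm]

theorem Matrix.vecMul_pow_eq_pow_smul {M : Matrix ι ι K} {z : ι → K} {μ : K}
    (h : z ᵥ* M = μ • z) (k : ℕ) : z ᵥ* M ^ k = μ ^ k • z := by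
  induction k with
  | zero => simp
  | succ k ih => rw [pow_succ, ← vecMul_vecMul, ih, smul_vecMul, h, smul_smul, pow_succ]

theorem Matrix.dotProduct_aeval_mulVec (M : Matrix ι ι K) (p : K[X]) (z b : ι → K) :
    z ⬝ᵥ (aeval M p *ᵥ b) =
      ∑ i ∈ Finset.range (p.natDegree + 1), p.coeff i * (z ⬝ᵥ (M ^ i *ᵥ b)) := by
  simp only [aeval_eq_sum_range, sum_mulVec, dotProduct_sum, smul_mulVec, dotProduct_smul,
    smul_eq_mul]

/- A left eigenvector `z` of `M + b cᵀ` for `μ` satisfies `z Mᵏ b = μᵏ (z ⬝ b)`, so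
Cayley–Hamilton gives `χ_M(μ) (z ⬝ b) = 0`; when `z ⬝ b = 0`, `z` is a left eigenvector of `M`. -/
theorem Matrix.spectrum_add_vecMulVec_subset {M : Matrix ι ι K} {b c : ι → K}
    (h : ∀ k < Fintype.card ι, c ⬝ᵥ (M ^ k *ᵥ b) = 0) :
    spectrum K (M + vecMulVec b c) ⊆ spectrum K M := by
  intro μ hμ
  obtain ⟨z, hz, hzN⟩ := mem_spectrum_iff_exists_vecMul_eq_smul.1 hμ
  set s := z ⬝ᵥ b
  have hzM : z ᵥ* M = μ • z - s • c := by
    rw [← hzN, vecMul_add, vecMul_vecMulVec, add_sub_cancel_right]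
  by_cases hs : s = 0
  · exact mem_spectrum_iff_exists_vecMul_eq_smul.2 ⟨z, hz, by rw [hzM, hs, zero_smul, sub_zero]⟩
  have hpow : ∀ k ≤ Fintype.card ι, z ⬝ᵥ (M ^ k *ᵥ b) = μ ^ k * s := by
    intro k hk
    induction k with
    | zero => simp [s]
    | succ k ih =>
      rw [pow_succ', ← mulVec_mulVec, dotProduct_mulVec, hzM, sub_dotProduct, smul_dotProduct,
        smul_dotProduct, ih (by omega), h k (by omega), smul_eq_mul, smul_eq_mul, mul_zero,
        sub_zero, pow_succ', mul_assoc]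
  have hroot : M.charpoly.eval μ * s = 0 := by
    have hCH := dotProduct_aeval_mulVec M M.charpoly z b
    rw [aeval_self_charpoly, zero_mulVec, dotProduct_zero, charpoly_natDegree_eq_dim] at hCH
    rw [eval_eq_sum_range, charpoly_natDegree_eq_dim, Finset.sum_mul, hCH]
    refine Finset.sum_congr rfl fun i hi => ?_
    rw [hpow i (Nat.lt_succ_iff.1 (Finset.mem_range.1 hi)), mul_assoc]
  rw [mem_spectrum_iff_isRoot_charpoly]
  exact (mul_eq_zero.1 hroot).resolve_right hs

theorem Matrix.eq_zero_of_mem_spectrum_of_isNilpotent {N : Matrix ι ι K} (hN : IsNilpotent N)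
    {μ : K} (hμ : μ ∈ spectrum K N) : μ = 0 := by
  obtain ⟨k, hk⟩ := hN
  obtain ⟨z, hz, hzN⟩ := mem_spectrum_iff_exists_vecMul_eq_smul.1 hμ
  have hzNk := vecMul_pow_eq_pow_smul hzN k
  rw [hk, vecMul_zero, eq_comm, smul_eq_zero] at hzNk
  exact eq_zero_of_pow_eq_zero (hzNk.resolve_right hz)

theorem Matrix.exists_vecMul_eq_zero_of_isNilpotent [Nonempty ι] {N : Matrix ι ι K}
    (hN : IsNilpotent N) : ∃ w ≠ 0, w ᵥ* N = 0 := by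
  obtain ⟨k, hk⟩ := hN
  refine exists_vecMul_eq_zero_iff.2 (eq_zero_of_pow_eq_zero (n := k) ?_)
  rw [← det_pow, hk, det_zero]

/- The rows `ℓ Nⁿ⁻ⁱ` and the columns `Nʲ b` form dual bases, since `ℓ Nⁿ⁻ⁱ⁺ʲ b = δᵢⱼ`,
and `Nⁿ⁺¹` vanishes between them. -/
theorem Matrix.pow_succ_eq_zero_of_dotProduct_pow_mulVec_eq_ite {n : ℕ}
    {N : Matrix (Fin (n + 1)) (Fin (n + 1)) K} {ℓ b : Fin (n + 1) → K}
    (h : ∀ k, ℓ ⬝ᵥ (N ^ k *ᵥ b) = if k = n then 1 else 0) : N ^ (n + 1) = 0 := by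
  let R : Matrix (Fin (n + 1)) (Fin (n + 1)) K := of fun i => ℓ ᵥ* N ^ (n - i : ℕ)
  let C : Matrix (Fin (n + 1)) (Fin (n + 1)) K := (of fun j => N ^ (j : ℕ) *ᵥ b)ᵀ
  have hRC : ∀ k i j, (R * N ^ k * C) i j = if n - i + k + j = n then 1 else 0 := by
    intro k i j
    rw [mul_mul_apply, ← h]
    change (ℓ ᵥ* N ^ (n - i : ℕ)) ⬝ᵥ (N ^ k *ᵥ (N ^ (j : ℕ) *ᵥ b)) = _
    rw [← dotProduct_mulVec, mulVec_mulVec, mulVec_mulVec, ← pow_add, ← pow_add]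
  have hCR : C * R = 1 := by
    rw [mul_eq_one_comm]
    ext i j
    have hij := hRC 0 i j
    rw [pow_zero, Matrix.mul_one] at hij
    rw [hij, one_apply]
    exact if_congr (by rw [Fin.ext_iff]; omega) rfl rfl
  have hgap : R * N ^ (n + 1) * C = 0 := by
    ext i j
    rw [hRC, if_neg (by omega), zero_apply]
  calc N ^ (n + 1) = C * R * N ^ (n + 1) * (C * R) := by rw [hCR, Matrix.one_mul, Matrix.mul_one]
    _ = C * (R * N ^ (n + 1) * C) * R := by simp only [Matrix.mul_assoc]
    _ = 0 := by rw [hgap, Matrix.mul_zero, Matrix.zero_mul]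

/- Ackermann's formula for the target polynomial `Xⁿ⁺¹`: with `N = M - b (ℓ Mⁿ⁺¹)`, the rows
`ℓ Nᵏ` agree with `ℓ Mᵏ` for `k ≤ n` and `ℓ Nⁿ⁺¹ = 0`. -/
theorem Matrix.pow_succ_add_vecMulVec_eq_zero {n : ℕ}
    {M : Matrix (Fin (n + 1)) (Fin (n + 1)) K} {ℓ b : Fin (n + 1) → K}
    (hℓ : ∀ k ≤ n, ℓ ⬝ᵥ (M ^ k *ᵥ b) = if k = n then 1 else 0) :
    (M + vecMulVec b (-(ℓ ᵥ* M ^ (n + 1)))) ^ (n + 1) = 0 := by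
  set N := M + vecMulVec b (-(ℓ ᵥ* M ^ (n + 1)))
  have hstep : ∀ k, ℓ ᵥ* M ^ k ᵥ* N =
      ℓ ᵥ* M ^ (k + 1) - (ℓ ⬝ᵥ (M ^ k *ᵥ b)) • ℓ ᵥ* M ^ (n + 1) := by
    intro k
    rw [vecMul_add, vecMul_vecMulVec, vecMul_vecMul, ← pow_succ, ← dotProduct_mulVec, smul_neg,
      sub_eq_add_neg]
  have hrow : ∀ k ≤ n, ℓ ᵥ* N ^ k = ℓ ᵥ* M ^ k := by
    intro k hk
    induction k with
    | zero => simp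
    | succ k ih =>
      rw [pow_succ, ← vecMul_vecMul, ih (by omega), hstep, hℓ k (by omega), if_neg (by omega),
        zero_smul, sub_zero]
  have hnull : ℓ ᵥ* N ^ (n + 1) = 0 := by
    rw [pow_succ, ← vecMul_vecMul, hrow n le_rfl, hstep, hℓ n le_rfl, if_pos rfl, one_smul,
      sub_self]
  refine pow_succ_eq_zero_of_dotProduct_pow_mulVec_eq_ite (ℓ := ℓ) (b := b) fun k => ?_
  rw [dotProduct_mulVec]
  rcases le_or_gt k n with hk | hk
  · rw [hrow k hk, ← dotProduct_mulVec, hℓ k hk]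
  · rw [if_neg (by omega), ← Nat.add_sub_cancel' hk, pow_add, ← vecMul_vecMul, hnull,
      zero_vecMul, zero_dotProduct]

theorem Matrix.exists_dotProduct_pow_mulVec_eq_ite {n : ℕ}
    {M : Matrix (Fin (n + 1)) (Fin (n + 1)) K} {b : Fin (n + 1) → K}
    (hb : ∀ c, (∀ k ≤ n, c ⬝ᵥ (M ^ k *ᵥ b) = 0) → c = 0) :
    ∃ ℓ, ∀ k ≤ n, ℓ ⬝ᵥ (M ^ k *ᵥ b) = if k = n then 1 else 0 := by
  let krylov : Matrix (Fin (n + 1)) (Fin (n + 1)) K := of fun i k => (M ^ (k : ℕ) *ᵥ b) i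
  have hkrylov : ∀ c k, (c ᵥ* krylov) k = c ⬝ᵥ (M ^ (k : ℕ) *ᵥ b) := fun _ _ => rfl
  have hinj : Function.Injective krylov.vecMulLinear := by
    refine (injective_iff_map_eq_zero _).2 fun c hc => hb c fun k hk => ?_
    rw [← hkrylov c ⟨k, by omega⟩]
    exact congrFun hc _
  obtain ⟨ℓ, hℓ⟩ := LinearMap.injective_iff_surjective.1 hinj (Pi.single (Fin.last n) 1)
  refine ⟨ℓ, fun k hk => ?_⟩
  rw [vecMulLinear_apply] at hℓ
  rw [← hkrylov ℓ ⟨k, by omega⟩, hℓ, Pi.single_apply]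
  exact if_congr (by simp [Fin.ext_iff]) rfl rfl

theorem Matrix.exists_isNilpotent_add_vecMulVec {n : ℕ}
    {M : Matrix (Fin (n + 1)) (Fin (n + 1)) K} {b : Fin (n + 1) → K}
    (hb : ∀ c, (∀ k ≤ n, c ⬝ᵥ (M ^ k *ᵥ b) = 0) → c = 0) :
    ∃ c, IsNilpotent (M + vecMulVec b c) :=
  let ⟨_, hℓ⟩ := exists_dotProduct_pow_mulVec_eq_ite hb
  ⟨_, n + 1, pow_succ_add_vecMulVec_eq_zero hℓ⟩

theorem Matrix.exists_ne_zero_dotProduct_mulVec_eq_zero {κ : Type*} [Fintype κ]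
    (hι : 1 < Fintype.card ι) (B : Matrix κ ι K) (w : κ → K) :
    ∃ v ≠ 0, w ⬝ᵥ (B *ᵥ v) = 0 := by
  have hker := (dotProductEquiv K ι (w ᵥ* B)).ker_ne_bot_of_finrank_lt
    (by rwa [Module.finrank_self, Module.finrank_fintype_fun_eq_card])
  obtain ⟨v, hv, hv0⟩ := (Submodule.ne_bot_iff _).1 hker
  exact ⟨v, hv0, by rwa [dotProduct_mulVec]⟩

end Field

theorem Matrix.vecMulVec_ne_zero' {α ι κ : Type*} [MulZeroClass α] [NoZeroDivisors α]
    {v : κ → α} {w : ι → α} (hv : v ≠ 0) (hw : w ≠ 0) : vecMulVec v w ≠ 0 := by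
  obtain ⟨i, hi⟩ := Function.ne_iff.1 hv
  obtain ⟨j, hj⟩ := Function.ne_iff.1 hw
  exact fun h => mul_ne_zero hi hj (congrFun₂ h i j)

section SpectralRadius

variable {ι : Type*} [Fintype ι] [DecidableEq ι]

theorem specRad_add_vecMulVec_le {M : Matrix ι ι ℝ} {b c : ι → ℝ}
    (h : ∀ k < Fintype.card ι, c ⬝ᵥ (M ^ k *ᵥ b) = 0) :
    specRad (M + vecMulVec b c) ≤ specRad M := by
  let f := algebraMap ℝ ℂ
  have hmap : (M + vecMulVec b c).map f = M.map f + vecMulVec (f ∘ b) (f ∘ c) := by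
    ext i j
    simp [vecMulVec_apply]
  have hcomplex : ∀ k < Fintype.card ι, (f ∘ c) ⬝ᵥ (M.map f ^ k *ᵥ (f ∘ b)) = 0 := by
    intro k hk
    have hpow : M.map f ^ k *ᵥ (f ∘ b) = f ∘ (M ^ k *ᵥ b) := funext fun i => by
      rw [← RingHom.mapMatrix_apply, ← map_pow, RingHom.mapMatrix_apply, Function.comp_apply,
        RingHom.map_mulVec]
    rw [hpow, ← RingHom.map_dotProduct, h k hk, map_zero]
  unfold specRad spectralRadius
  rw [hmap]
  exact biSup_mono fun μ hμ => spectrum_add_vecMulVec_subset hcomplex hμ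

theorem specRad_eq_zero_of_isNilpotent {N : Matrix ι ι ℝ} (hN : IsNilpotent N) :
    specRad N = 0 := by
  have hNC : IsNilpotent (N.map (algebraMap ℝ ℂ)) := hN.map (algebraMap ℝ ℂ).mapMatrix
  unfold specRad spectralRadius
  refine le_antisymm (iSup₂_le fun μ hμ => ?_) bot_le
  simp [eq_zero_of_mem_spectrum_of_isNilpotent hNC hμ]

end SpectralRadius

theorem not_isBounded_of_forall_add_smul_mem {E : Type*} [NormedAddCommGroup E]
    [NormedSpace ℝ E] {S : Set E} {x d : E} (hd : d ≠ 0) (h : ∀ t : ℝ, x + t • d ∈ S) :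
    ¬ Bornology.IsBounded S := by
  intro hS
  obtain ⟨C, hC⟩ := isBounded_iff_forall_norm_le.1 hS
  have hd' : 0 < ‖d‖ := norm_pos_iff.2 hd
  set t := (C + ‖x‖ + 1) / ‖d‖
  have ht : ‖t • d‖ = C + ‖x‖ + 1 := by
    have : 0 ≤ C := (norm_nonneg _).trans (hC _ (h 0))
    rw [norm_smul, Real.norm_of_nonneg (by positivity), div_mul_cancel₀ _ hd'.ne']
  have htri := norm_sub_le (x + t • d) x
  rw [add_sub_cancel_left, ht] at htri
  linarith [hC _ (h t)]

def stableGains {ι κ : Type*} [Fintype ι] [DecidableEq ι] [Fintype κ] (A : Matrix ι ι ℝ)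
    (B : Matrix ι κ ℝ) : Set (Matrix κ ι ℝ) :=
  {K | specRad (A + B * K) < 1}

theorem not_isBounded_stableGains_of_dotProduct_pow_mulVec_eq_zero {ι κ : Type*} [Fintype ι]
    [DecidableEq ι] [Fintype κ] {A : Matrix ι ι ℝ} {B : Matrix ι κ ℝ} {K₀ : Matrix κ ι ℝ}
    {v : κ → ℝ} {w : ι → ℝ} (hK₀ : specRad (A + B * K₀) < 1) (hv : v ≠ 0) (hw : w ≠ 0)
    (horth : ∀ k < Fintype.card ι, w ⬝ᵥ ((A + B * K₀) ^ k *ᵥ (B *ᵥ v)) = 0) :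
    ¬ Bornology.IsBounded (stableGains A B) := by
  refine not_isBounded_of_forall_add_smul_mem (x := K₀) (vecMulVec_ne_zero' hv hw) fun t => ?_
  have hgain : A + B * (K₀ + t • vecMulVec v w) = A + B * K₀ + vecMulVec (B *ᵥ v) (t • w) := by
    rw [Matrix.mul_add, Matrix.mul_smul, mul_vecMulVec, vecMulVec_smul, add_assoc]
  show specRad (A + B * (K₀ + t • vecMulVec v w)) < 1
  rw [hgain]
  refine lt_of_le_of_lt (specRad_add_vecMulVec_le fun k hk => ?_) hK₀
  rw [smul_dotProduct, horth k hk, smul_zero]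

/-- If `m ≥ 2` and the set of stabilizing gains `S = {K : ρ(A+BK) < 1}` is
nonempty, then `S` is unbounded.  (We assume `n ≥ 1`, i.e. the state space is
nontrivial, as is implicit in the discussion.) -/
theorem stmt_2 {n m : ℕ} (hn : 1 ≤ n) (hm : 2 ≤ m) (A : Matrix (Fin n) (Fin n) ℝ)
    (B : Matrix (Fin n) (Fin m) ℝ)
    (hS : {K : Matrix (Fin m) (Fin n) ℝ | specRad (A + B * K) < 1}.Nonempty) :
    ¬ Bornology.IsBounded
      {K : Matrix (Fin m) (Fin n) ℝ | specRad (A + B * K) < 1} := by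
  obtain ⟨K₀, hK₀⟩ := hS
  obtain ⟨d, rfl⟩ := Nat.exists_eq_add_of_le' hn
  set e₀ : Fin m → ℝ := Pi.single ⟨0, by omega⟩ 1
  by_cases hcyc : ∀ c, (∀ k ≤ d, c ⬝ᵥ ((A + B * K₀) ^ k *ᵥ (B *ᵥ e₀)) = 0) → c = 0
  · obtain ⟨c, hc⟩ := exists_isNilpotent_add_vecMulVec hcyc
    have hnil : IsNilpotent (A + B * (K₀ + vecMulVec e₀ c)) := by
      rwa [Matrix.mul_add, ← add_assoc, mul_vecMulVec]
    obtain ⟨w, hw, hwN⟩ := exists_vecMul_eq_zero_of_isNilpotent hnil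
    obtain ⟨v, hv, hwv⟩ := exists_ne_zero_dotProduct_mulVec_eq_zero (by simpa) B w
    refine not_isBounded_stableGains_of_dotProduct_pow_mulVec_eq_zero
      ((specRad_eq_zero_of_isNilpotent hnil).trans_lt one_pos) hv hw fun k _ => ?_
    rcases k with _ | k
    · simpa using hwv
    · rw [dotProduct_mulVec, pow_succ', ← vecMul_vecMul, hwN, zero_vecMul, zero_dotProduct]
  · push Not at hcyc
    obtain ⟨c, hc, hc0⟩ := hcyc
    exact not_isBounded_stableGains_of_dotProduct_pow_mulVec_eq_zero hK₀ (by simp [e₀]) hc0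
      fun k hk => hc k (by simpa using hk)
end

section
/- The set of stabilizing static state-feedback gains S = {K : ρ(A+BK) < 1} is path-connected. -/
/-!
A gain `K` is stabilizing iff some `P ≻ 0` satisfies the Lyapunov inequality
`P - (A + B K) P (A + B K)ᵀ ≻ 0`. In the variables `(P, Y) = (P, K P)` this inequality becomes,
by a Schur complement, positive definiteness of the block matrix `[[P, (A P + B Y)ᵀ], [A P + B Y, P]]`,
which depends linearly on `(P, Y)`. So the stabilizing gains are the image of a convex set under
the continuous map `(P, Y) ↦ Y P⁻¹`, hence path-connected.

For the Lyapunov characterization of `ρ(M) < 1`: if `v` is a left eigenvector of `M` for `z`, then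
`v* (P - M P Mᵀ) v = (1 - |z|²) v* P v`. Conversely, Gelfand's formula gives `N > 0` with
`‖M ^ N‖ < 1` in the operator norm, and `P = ∑_{k<N} M^k (Mᵀ)^k` works because
`P - M P Mᵀ = 1 - M^N (M^N)ᵀ`.
-/

open Matrix

open scoped ComplexOrder

theorem sum_range_pow_mul_pow_sub {R : Type*} [Ring R] (a b : R) (N : ℕ) :
    (∑ k ∈ Finset.range N, a ^ k * b ^ k) - a * (∑ k ∈ Finset.range N, a ^ k * b ^ k) * b
      = 1 - a ^ N * b ^ N := by
  have hshift : a * (∑ k ∈ Finset.range N, a ^ k * b ^ k) * b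
      = ∑ k ∈ Finset.range N, a ^ (k + 1) * b ^ (k + 1) := by
    rw [Finset.mul_sum, Finset.sum_mul]
    refine Finset.sum_congr rfl fun k _ => ?_
    rw [pow_succ', pow_succ]
    simp only [mul_assoc]
  have h := Finset.sum_range_succ' (fun k => a ^ k * b ^ k) N
  rw [Finset.sum_range_succ, pow_zero, pow_zero, mul_one] at h
  rw [hshift, eq_sub_of_add_eq h.symm]
  abel

theorem eventually_norm_pow_lt_one_of_spectralRadius_lt_one {A : Type*} [NormedRing A]
    [NormedAlgebra ℂ A] [CompleteSpace A] {a : A} (ha : spectralRadius ℂ a < 1) :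
    ∀ᶠ k in Filter.atTop, ‖a ^ k‖ < 1 := by
  filter_upwards [(spectrum.pow_nnnorm_pow_one_div_tendsto_nhds_spectralRadius a).eventually
    (gt_mem_nhds ha), Filter.eventually_gt_atTop 0] with k hk hk0
  by_contra! h
  exact (ENNReal.one_le_rpow (by exact_mod_cast h) (by positivity)).not_gt hk

namespace Matrix

section SchurComplement

variable {m n 𝕜 : Type*} [Fintype m] [Fintype n] [DecidableEq m] [RCLike 𝕜]

theorem PosDef.posDef_fromBlocks₁₁_iff {A : Matrix m m 𝕜} (B : Matrix m n 𝕜) (D : Matrix n n 𝕜)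
    (hA : A.PosDef) [Invertible A] :
    (fromBlocks A B Bᴴ D).PosDef ↔ (D - Bᴴ * A⁻¹ * B).PosDef := by
  classical
  have hdet : (fromBlocks A B Bᴴ D).det = A.det * (D - Bᴴ * A⁻¹ * B).det := by
    rw [det_fromBlocks₁₁, invOf_eq_nonsing_inv]
  constructor
  · intro h
    refine ((hA.fromBlocks₁₁ B D).mp h.posSemidef).posDef_iff_det_ne_zero.mpr ?_
    exact right_ne_zero_of_mul (hdet ▸ h.det_pos.ne')
  · intro h
    refine ((hA.fromBlocks₁₁ B D).mpr h.posSemidef).posDef_iff_det_ne_zero.mpr ?_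
    rw [hdet]
    exact mul_ne_zero hA.det_pos.ne' h.det_pos.ne'

end SchurComplement

theorem convex_setOf_posDef {n 𝕜 : Type*} [Fintype n] [RCLike 𝕜] :
    Convex ℝ {A : Matrix n n 𝕜 | A.PosDef} := by
  intro A hA B hB a b ha hb hab
  rcases ha.eq_or_lt with rfl | ha
  · simp_all
  rcases hb.eq_or_lt with rfl | hb
  · simp_all
  exact (hA.smul ha).add (hB.smul hb)

theorem conjTranspose_map_algebraMap {p q : Type*} (M : Matrix q p ℝ) :
    (M.map (algebraMap ℝ ℂ))ᴴ = Mᴴ.map (algebraMap ℝ ℂ) :=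
  (conjTranspose_map _ algebraMap_star_comm).symm

section Complexification

variable {p : Type*} [Fintype p]

theorem re_star_dotProduct_map_algebraMap_mulVec (P : Matrix p p ℝ) (v : p → ℂ) :
    (star v ⬝ᵥ P.map (algebraMap ℝ ℂ) *ᵥ v).re
      = (fun i => (v i).re) ⬝ᵥ P *ᵥ (fun i => (v i).re)
        + (fun i => (v i).im) ⬝ᵥ P *ᵥ (fun i => (v i).im) := by
  simp only [dotProduct, mulVec, Finset.mul_sum, ← Finset.sum_add_distrib, Complex.re_sum]
  refine Finset.sum_congr rfl fun i _ => Finset.sum_congr rfl fun j _ => ?_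
  simp

theorem posDef_map_algebraMap_iff {P : Matrix p p ℝ} :
    (P.map (algebraMap ℝ ℂ)).PosDef ↔ P.PosDef := by
  constructor
  · intro hP
    refine .of_dotProduct_mulVec_pos ?_ fun x hx => ?_
    · refine map_injective (f := algebraMap ℝ ℂ) RCLike.ofReal_injective ?_
      exact (conjTranspose_map_algebraMap P).symm.trans hP.1.eq
    · have hv : (fun i => (x i : ℂ)) ≠ 0 := fun h => hx (funext fun i => by simpa using congrFun h i)
      have h := hP.re_dotProduct_pos hv
      rw [RCLike.re_to_complex, re_star_dotProduct_map_algebraMap_mulVec] at h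
      simpa using h
  · intro hP
    have hherm := hP.1.map (algebraMap ℝ ℂ) (algebraMap_star_comm (A := ℂ))
    refine .of_dotProduct_mulVec_pos hherm fun v hv =>
      RCLike.pos_iff.mpr ⟨?_, hherm.im_star_dotProduct_mulVec_self v⟩
    rw [RCLike.re_to_complex, re_star_dotProduct_map_algebraMap_mulVec]
    by_cases hre : (fun i => (v i).re) = 0
    · have him : (fun i => (v i).im) ≠ 0 := fun him =>
        hv (funext fun i => Complex.ext (congrFun hre i) (congrFun him i))
      rw [hre, zero_dotProduct, zero_add]
      exact hP.dotProduct_mulVec_pos him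
    · exact add_pos_of_pos_of_nonneg (hP.dotProduct_mulVec_pos hre)
        (hP.posSemidef.dotProduct_mulVec_nonneg _)

end Complexification

theorem exists_vecMul_eq_smul_of_mem_spectrum {p K : Type*} [Fintype p] [DecidableEq p] [Field K]
    {A : Matrix p p K} {z : K} (hz : z ∈ spectrum K A) : ∃ v : p → K, v ≠ 0 ∧ v ᵥ* A = z • v := by
  rw [mem_spectrum_iff_isRoot_charpoly, ← charpoly_transpose, ← mem_spectrum_iff_isRoot_charpoly,
    ← spectrum_toLin', ← Module.End.hasEigenvalue_iff_mem_spectrum] at hz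
  obtain ⟨v, hv⟩ := hz.exists_hasEigenvector
  exact ⟨v, hv.2, by rw [← mulVec_transpose]; exact hv.apply_eq_smul⟩

open scoped Matrix.Norms.L2Operator MatrixOrder in
theorem posDef_one_sub_mul_conjTranspose_of_norm_lt_one {p : Type*} [Fintype p] [DecidableEq p]
    {X : Matrix p p ℂ} (hX : ‖X‖ < 1) : (1 - X * Xᴴ).PosDef := by
  have hle : X * Xᴴ ≤ algebraMap ℝ _ (‖X‖ ^ 2) := CStarAlgebra.mul_star_le_algebraMap_norm_sq
  have hsplit : 1 - X * Xᴴ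
      = (1 - ‖X‖ ^ 2) • (1 : Matrix p p ℂ) + (algebraMap ℝ _ (‖X‖ ^ 2) - X * Xᴴ) := by
    rw [Algebra.algebraMap_eq_smul_one]
    module
  rw [hsplit]
  exact (PosDef.one.smul (by nlinarith [norm_nonneg X])).add_posSemidef hle

end Matrix

section Lyapunov

variable {p : Type*} [Fintype p] [DecidableEq p]

def IsLyapunovCertificate {R : Type*} [Ring R] [PartialOrder R] [StarRing R]
    (M P : Matrix p p R) : Prop :=
  P.PosDef ∧ (P - M * P * Mᴴ).PosDef

theorem IsLyapunovCertificate.norm_lt_one_of_mem_spectrum {X P : Matrix p p ℂ}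
    (h : IsLyapunovCertificate X P) {z : ℂ} (hz : z ∈ spectrum ℂ X) : ‖z‖ < 1 := by
  obtain ⟨u, hu, heig⟩ : ∃ u : p → ℂ, u ≠ 0 ∧ Xᴴ *ᵥ u = star z • u := by
    obtain ⟨v, hv, hvz⟩ := exists_vecMul_eq_smul_of_mem_spectrum hz
    exact ⟨star v, by simpa using hv, by rw [← star_vecMul, hvz, star_smul]⟩
  have hleft : star u ᵥ* X = z • star u := by
    have := congrArg star heig
    rwa [star_mulVec, conjTranspose_conjTranspose, star_smul, star_star] at this
  have hquad : star u ⬝ᵥ (P - X * P * Xᴴ) *ᵥ u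
      = (1 - Complex.normSq z : ℝ) * (star u ⬝ᵥ P *ᵥ u) := by
    rw [sub_mulVec, dotProduct_sub, ← mulVec_mulVec, ← mulVec_mulVec, heig,
      dotProduct_mulVec (star u) X, hleft, mulVec_smul, smul_dotProduct, dotProduct_smul]
    simp only [smul_eq_mul, Complex.ofReal_sub, Complex.ofReal_one, Complex.normSq_eq_conj_mul_self,
      Complex.star_def]
    ring
  have hc := (RCLike.pos_iff.mp (h.1.dotProduct_mulVec_pos hu)).1
  have hd := (RCLike.pos_iff.mp (h.2.dotProduct_mulVec_pos hu)).1
  rw [RCLike.re_to_complex] at hc hd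
  rw [hquad, Complex.re_ofReal_mul, Complex.normSq_eq_norm_sq] at hd
  have hnorm : ‖z‖ ^ 2 < 1 := by linarith [(pos_iff_pos_of_mul_pos hd).mpr hc]
  exact (sq_lt_one_iff₀ (norm_nonneg z)).mp hnorm

theorem IsLyapunovCertificate.map_algebraMap {M P : Matrix p p ℝ} (h : IsLyapunovCertificate M P) :
    IsLyapunovCertificate (M.map (algebraMap ℝ ℂ)) (P.map (algebraMap ℝ ℂ)) := by
  refine ⟨posDef_map_algebraMap_iff.mpr h.1, ?_⟩
  rw [conjTranspose_map_algebraMap]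
  simpa only [← RingHom.mapMatrix_apply, map_sub, map_mul] using posDef_map_algebraMap_iff.mpr h.2

open scoped Matrix.Norms.L2Operator in
theorem specRad_lt_one_of_isLyapunovCertificate {M P : Matrix p p ℝ}
    (h : IsLyapunovCertificate M P) : specRad M < 1 := by
  -- Any Banach-algebra norm serves here, as the spectrum does not depend on it; Gelfand theory
  -- needs a nontrivial algebra, whence the separate empty case.
  rcases isEmpty_or_nonempty p with hp | hp
  · simp [specRad, spectralRadius, spectrum.of_subsingleton]
  exact_mod_cast spectrum.spectralRadius_lt_of_forall_lt _ fun z hz =>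
    (show ‖z‖₊ < 1 from h.map_algebraMap.norm_lt_one_of_mem_spectrum hz)

open scoped Matrix.Norms.L2Operator in
theorem exists_isLyapunovCertificate_of_specRad_lt_one {M : Matrix p p ℝ} (h : specRad M < 1) :
    ∃ P, IsLyapunovCertificate M P := by
  obtain ⟨N, hN, hN0⟩ := ((eventually_norm_pow_lt_one_of_spectralRadius_lt_one h).and
    (Filter.eventually_gt_atTop 0)).exists
  refine ⟨∑ k ∈ Finset.range N, M ^ k * Mᴴ ^ k, ?_, ?_⟩
  · obtain ⟨N, rfl⟩ := Nat.exists_eq_add_of_lt hN0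
    rw [Finset.sum_range_succ', pow_zero, pow_zero, mul_one]
    refine PosDef.posSemidef_add (posSemidef_sum _ fun k _ => ?_) PosDef.one
    rw [← conjTranspose_pow]
    exact posSemidef_self_mul_conjTranspose _
  · rw [sum_range_pow_mul_pow_sub, ← conjTranspose_pow, ← posDef_map_algebraMap_iff]
    have hpow : (M ^ N).map (algebraMap ℝ ℂ) = M.map (algebraMap ℝ ℂ) ^ N :=
      map_pow (algebraMap ℝ ℂ).mapMatrix M N
    have hmap : (1 - M ^ N * (M ^ N)ᴴ).map (algebraMap ℝ ℂ)
        = 1 - M.map (algebraMap ℝ ℂ) ^ N * (M.map (algebraMap ℝ ℂ) ^ N)ᴴ := by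
      rw [← hpow, conjTranspose_map_algebraMap]
      simp only [← RingHom.mapMatrix_apply, map_sub, map_one, map_mul]
    rw [hmap]
    exact posDef_one_sub_mul_conjTranspose_of_norm_lt_one hN

end Lyapunov

section StateFeedback

variable {ι κ : Type*} [Fintype ι] [Fintype κ] (A : Matrix ι ι ℝ) (B : Matrix ι κ ℝ)

def lmiBlock : Matrix ι ι ℝ × Matrix κ ι ℝ →ₗ[ℝ] Matrix (ι ⊕ ι) (ι ⊕ ι) ℝ where
  toFun q := fromBlocks q.1 (A * q.1 + B * q.2)ᴴ (A * q.1 + B * q.2) q.1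
  map_add' q r := by
    simp only [Prod.fst_add, Prod.snd_add, Matrix.mul_add, conjTranspose_add, fromBlocks_add]
    congr 1 <;> abel
  map_smul' c q := by
    simp only [Prod.smul_fst, Prod.smul_snd, Matrix.mul_smul, ← smul_add, conjTranspose_smul,
      star_trivial, fromBlocks_smul, RingHom.id_apply]

def stabilizingLMI : Set (Matrix ι ι ℝ × Matrix κ ι ℝ) :=
  lmiBlock A B ⁻¹' {X | X.PosDef}

theorem convex_stabilizingLMI : Convex ℝ (stabilizingLMI A B) :=
  convex_setOf_posDef.linear_preimage _

variable {A B}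

theorem posDef_of_mem_stabilizingLMI {q : Matrix ι ι ℝ × Matrix κ ι ℝ}
    (hq : q ∈ stabilizingLMI A B) : q.1.PosDef :=
  hq.submatrix Sum.inl_injective

variable [DecidableEq ι]

theorem mk_mul_mem_stabilizingLMI_iff {P : Matrix ι ι ℝ} {K : Matrix κ ι ℝ} :
    (P, K * P) ∈ stabilizingLMI A B ↔ IsLyapunovCertificate (A + B * K) P := by
  have hSchur (hP : P.PosDef) :
      (P, K * P) ∈ stabilizingLMI A B ↔ (P - (A + B * K) * P * (A + B * K)ᴴ).PosDef := by
    have hN : A * P + B * (K * P) = (A + B * K) * P := by rw [add_mul, Matrix.mul_assoc]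
    have := hP.isUnit.invertible
    have hcongr : (A + B * K) * P * P⁻¹ * ((A + B * K) * P)ᴴ = (A + B * K) * P * (A + B * K)ᴴ := by
      rw [mul_nonsing_inv_cancel_right _ _ hP.det_pos.ne'.isUnit, conjTranspose_mul, hP.1.eq,
        Matrix.mul_assoc]
    have h := hP.posDef_fromBlocks₁₁_iff ((A + B * K) * P)ᴴ P
    rw [conjTranspose_conjTranspose, hcongr] at h
    change (fromBlocks P (A * P + B * (K * P))ᴴ (A * P + B * (K * P)) P).PosDef ↔ _
    rwa [hN]
  exact ⟨fun h => ⟨posDef_of_mem_stabilizingLMI h, (hSchur (posDef_of_mem_stabilizingLMI h)).mp h⟩,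
    fun h => (hSchur h.1).mpr h.2⟩

theorem setOf_specRad_lt_one_eq_image :
    {K : Matrix κ ι ℝ | specRad (A + B * K) < 1} = (fun q => q.2 * q.1⁻¹) '' stabilizingLMI A B := by
  ext K
  constructor
  · intro hK
    obtain ⟨P, hP⟩ := exists_isLyapunovCertificate_of_specRad_lt_one hK
    exact ⟨(P, K * P), mk_mul_mem_stabilizingLMI_iff.mpr hP,
      mul_nonsing_inv_cancel_right P K hP.1.det_pos.ne'.isUnit⟩
  · rintro ⟨⟨P, Y⟩, hq, rfl⟩
    have hP := posDef_of_mem_stabilizingLMI hq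
    rw [← nonsing_inv_mul_cancel_right P Y hP.det_pos.ne'.isUnit] at hq
    exact specRad_lt_one_of_isLyapunovCertificate (mk_mul_mem_stabilizingLMI_iff.mp hq)

variable (A B) in
theorem continuousOn_stabilizingLMI :
    ContinuousOn (fun q : Matrix ι ι ℝ × Matrix κ ι ℝ => q.2 * q.1⁻¹) (stabilizingLMI A B) := by
  intro q hq
  have hdet := (posDef_of_mem_stabilizingLMI hq).det_pos.ne'
  have hinv : ContinuousAt Inv.inv q.1 :=
    continuousAt_matrix_inv _ (by rw [Ring.inverse_eq_inv']; exact continuousAt_inv₀ hdet)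
  exact ((continuous_fst.matrix_mul continuous_snd).continuousAt.comp
    (continuousAt_snd.prodMk (hinv.comp continuousAt_fst))).continuousWithinAt

end StateFeedback

/-- The set of stabilizing static state-feedback gains
`S = {K : ρ(A+BK) < 1}` is path-connected (assuming it is nonempty, i.e.
`(A,B)` is stabilizable). -/
theorem stmt_9 {n m : ℕ} (A : Matrix (Fin n) (Fin n) ℝ)
    (B : Matrix (Fin n) (Fin m) ℝ)
    (hS : {K : Matrix (Fin m) (Fin n) ℝ | specRad (A + B * K) < 1}.Nonempty) :
    IsPathConnected {K : Matrix (Fin m) (Fin n) ℝ | specRad (A + B * K) < 1} := by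
  rw [setOf_specRad_lt_one_eq_image] at hS ⊢
  exact ((convex_stabilizingLMI A B).isPathConnected hS.of_image).image'
    (continuousOn_stabilizingLMI A B)
end

section
/- Stability certificate for the Euclidean retraction: let K ∈ S (so A_cl = A+BK satisfies ρ(A_cl) < 1), let V ∈ ℝ^{m×n}, and set s = 1 / (2 λ_max(L(A_clᵀ, I)) · ‖BV‖₂). Then for every η with 0 ≤ η ≤ s, the gain K + ηV is stabilizing: ρ(A + B(K+ηV)) < 1. -/
open Matrix

/-- The solution `L(A,Q) = ∑ₖ Aᵏ Q (Aᵀ)ᵏ` of the discrete Lyapunov equation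
`P = A P Aᵀ + Q` (unique when `ρ(A) < 1`). -/
noncomputable def lyap {n : ℕ} (A Q : Matrix (Fin n) (Fin n) ℝ) :
    Matrix (Fin n) (Fin n) ℝ :=
  ∑' k : ℕ, A ^ k * Q * Aᵀ ^ k

open scoped Matrix.Norms.L2Operator

/-!
With `a = A + BK`, the series `P = L(aᵀ, I) = ∑ₖ (aᵀ)ᵏ aᵏ` converges because `ρ(a) < 1`;
it satisfies `aᵀ P a = P - I` and `0 ≤ P ≤ λ_max I`. For the norm `‖x‖_P = ‖P^{1/2} x‖` on `ℂⁿ`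
this gives `‖a x‖_P² = ‖x‖_P² - ‖x‖²` and `‖x‖² ≤ ‖x‖_P² ≤ λ_max ‖x‖²`, hence
`‖x‖_P - ‖a x‖_P > ‖x‖² / (2 ‖x‖_P) ≥ ‖x‖ / (2 √λ_max)`,
while `‖η B V x‖_P ≤ √λ_max ‖η B V‖ ‖x‖ ≤ ‖x‖ / (2 √λ_max)`. So `a + η B V` strictly shrinks
`‖·‖_P`, and every complex eigenvalue of `A + B (K + η V)` lies in the open unit disc.
-/

open Filter Topology

section BanachAlgebra

variable {A : Type*} [NormedRing A] [NormedAlgebra ℂ A] [CompleteSpace A]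

theorem exists_norm_pow_le_of_spectralRadius_lt_one {a : A} (ha : spectralRadius ℂ a < 1) :
    ∃ r : ℝ, 0 ≤ r ∧ r < 1 ∧ ∀ᶠ k in atTop, ‖a ^ k‖ ≤ r ^ k := by
  obtain ⟨c, hρc, hc1⟩ := exists_between ha
  have hc : c ≠ ⊤ := (hc1.trans ENNReal.one_lt_top).ne
  refine ⟨c.toReal, ENNReal.toReal_nonneg, ENNReal.toReal_lt_of_lt_ofReal (by simpa using hc1), ?_⟩
  filter_upwards [(spectrum.pow_norm_pow_one_div_tendsto_nhds_spectralRadius a).eventually_lt_const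
    hρc, eventually_gt_atTop 0] with k hk hk0
  have hroot : ‖a ^ k‖ ^ (k : ℝ)⁻¹ < c.toReal := by
    rw [← one_div]
    exact (ENNReal.ofReal_lt_iff_lt_toReal (by positivity) hc).mp hk
  rw [Real.rpow_inv_lt_iff_of_pos (norm_nonneg _) ENNReal.toReal_nonneg (by positivity)] at hroot
  exact_mod_cast hroot.le

theorem summable_star_pow_mul_pow [StarRing A] [CStarRing A] {a : A}
    (ha : spectralRadius ℂ a < 1) : Summable fun k ↦ star (a ^ k) * a ^ k := by
  obtain ⟨r, hr0, hr1, hr⟩ := exists_norm_pow_le_of_spectralRadius_lt_one ha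
  refine .of_norm_bounded_eventually_nat
    (summable_geometric_of_lt_one (by positivity) (pow_lt_one₀ hr0 hr1 two_ne_zero)) ?_
  filter_upwards [hr] with k hk
  calc ‖star (a ^ k) * a ^ k‖ = ‖a ^ k‖ * ‖a ^ k‖ := CStarRing.norm_star_mul_self
    _ ≤ r ^ k * r ^ k := by gcongr
    _ = (r ^ 2) ^ k := by ring

theorem spectralRadius_lt_one_of_forall_norm_lt_one {a : A}
    (h : ∀ z ∈ spectrum ℂ a, ‖z‖ < 1) : spectralRadius ℂ a < 1 := by
  rcases (spectrum ℂ a).eq_empty_or_nonempty with hempty | hne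
  · simp [spectralRadius, hempty]
  · exact_mod_cast spectrum.spectralRadius_lt_of_forall_lt_of_nonempty hne (r := 1)
      fun z hz ↦ by exact_mod_cast h z hz

end BanachAlgebra

theorem star_mul_mul_add_one_of_hasSum {A : Type*} [Ring A] [StarRing A] [TopologicalSpace A]
    [IsTopologicalRing A] [T2Space A] {a P : A}
    (hP : HasSum (fun k ↦ star (a ^ k) * a ^ k) P) : star a * P * a + 1 = P := by
  have hshift := (hasSum_nat_add_iff' 1).mpr hP
  simp only [Finset.range_one, Finset.sum_singleton, pow_zero, star_one, mul_one] at hshift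
  have hterm : (fun k ↦ star a * (star (a ^ k) * a ^ k) * a) =
      fun k ↦ star (a ^ (k + 1)) * a ^ (k + 1) := by
    funext k
    simp only [pow_succ, star_mul, mul_assoc]
  have hconj : star a * P * a = P - 1 :=
    ((hP.mul_left (star a)).mul_right a).unique (hterm ▸ hshift)
  rw [hconj, sub_add_cancel]

/-- `u - v = c₀ / (u + v) > c₀ / (2 u)`, and `c₀ / (2 u) ≥ e` because `u² ≤ c c₀`. -/
theorem add_lt_of_sq_eq_sub {u v e c₀ c : ℝ} (hu : 0 ≤ u) (hv : 0 ≤ v) (hc₀ : 0 < c₀)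
    (hvu : v ^ 2 = u ^ 2 - c₀) (huc : u ^ 2 ≤ c * c₀) (hec : 4 * c * e ^ 2 ≤ c₀) :
    v + e < u := by
  by_contra! h
  have hvu' : v < u := by nlinarith
  have he : 0 < e := by nlinarith
  have hc₀e : c₀ < 2 * u * e := by nlinarith
  nlinarith [mul_lt_mul'' hc₀e hc₀e hc₀.le hc₀.le]

section HilbertSpace

variable {E : Type*} [NormedAddCommGroup E] [InnerProductSpace ℂ E]

theorem re_inner_le_of_le_algebraMap {P : E →L[ℂ] E} {c : ℝ} (h : P ≤ algebraMap ℝ _ c)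
    (x : E) : RCLike.re (inner ℂ (P x) x) ≤ c * ‖x‖ ^ 2 := by
  have := ((ContinuousLinearMap.le_def _ _).mp h).re_inner_nonneg_left x
  simpa [inner_sub_left, ← Complex.coe_smul, inner_smul_left, inner_self_eq_norm_sq_to_K,
    ← Complex.ofReal_pow] using this

variable [CompleteSpace E]

theorem norm_sqrt_apply_sq {P : E →L[ℂ] E} (hP : 0 ≤ P) (x : E) :
    ‖CFC.sqrt P x‖ ^ 2 = RCLike.re (inner ℂ (P x) x) := by
  rw [ContinuousLinearMap.apply_norm_sq_eq_inner_adjoint_left,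
    ← ContinuousLinearMap.star_eq_adjoint, (CFC.sqrt_nonneg P).isSelfAdjoint.star_eq,
    ← ContinuousLinearMap.mul_def, CFC.sqrt_mul_sqrt_self P]

theorem spectralRadius_add_lt_one_of_lyapunov [FiniteDimensional ℂ E] {a w P : E →L[ℂ] E}
    {c : ℝ} (hP : 0 ≤ P) (hlyap : star a * P * a + 1 = P) (hPc : P ≤ algebraMap ℝ _ c)
    (hw : 2 * c * ‖w‖ ≤ 1) : spectralRadius ℂ (a + w) < 1 := by
  set S := CFC.sqrt P
  have hSa (x : E) : ‖S (a x)‖ ^ 2 = ‖S x‖ ^ 2 - ‖x‖ ^ 2 := by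
    have hcomp : star a (P (a x)) = (star a * P * a) x := rfl
    rw [norm_sqrt_apply_sq hP, norm_sqrt_apply_sq hP, ← ContinuousLinearMap.adjoint_inner_left,
      ← ContinuousLinearMap.star_eq_adjoint, hcomp, eq_sub_of_add_eq hlyap]
    simp [inner_sub_left, inner_self_eq_norm_sq_to_K, ← Complex.ofReal_pow]
  have hSc (x : E) : ‖S x‖ ^ 2 ≤ c * ‖x‖ ^ 2 :=
    norm_sqrt_apply_sq hP x ▸ re_inner_le_of_le_algebraMap hPc x
  refine spectralRadius_lt_one_of_forall_norm_lt_one fun z hz ↦ ?_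
  rw [ContinuousLinearMap.spectrum_eq] at hz
  obtain ⟨x, hx⟩ := (Module.End.HasEigenvalue.of_mem_spectrum hz).exists_hasEigenvector
  have hx0 : 0 < ‖x‖ ^ 2 := by have := hx.2; positivity
  have hc : 1 ≤ c := by nlinarith [hSa x, hSc x, sq_nonneg ‖S (a x)‖]
  have hSw : 4 * c * ‖S (w x)‖ ^ 2 ≤ ‖x‖ ^ 2 := by
    have hwx := w.le_opNorm x
    calc 4 * c * ‖S (w x)‖ ^ 2 ≤ 4 * c * (c * (‖w‖ * ‖x‖) ^ 2) := by
          gcongr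
          exact (hSc _).trans (by gcongr)
      _ = (2 * c * ‖w‖) ^ 2 * ‖x‖ ^ 2 := by ring
      _ ≤ ‖x‖ ^ 2 := mul_le_of_le_one_left hx0.le (pow_le_one₀ (by positivity) hw)
  have hlt := add_lt_of_sq_eq_sub (norm_nonneg _) (norm_nonneg _) hx0 (hSa x) (hSc x) hSw
  have hz : ‖z‖ * ‖S x‖ ≤ ‖S (a x)‖ + ‖S (w x)‖ := by
    rw [← norm_smul, ← map_smul, ← hx.apply_eq_smul]
    simpa using norm_add_le (S (a x)) (S (w x))
  have hSx : 0 < ‖S x‖ := by linarith [norm_nonneg (S (a x)), norm_nonneg (S (w x))]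
  nlinarith

end HilbertSpace

namespace Matrix

variable {n : Type*} [Fintype n] [DecidableEq n]

theorem algebraMap_mem_spectrum_map {K L : Type*} [Field K] [Field L] [Algebra K L]
    (M : Matrix n n K) (μ : K) :
    algebraMap K L μ ∈ spectrum L (M.map (algebraMap K L)) ↔ μ ∈ spectrum K M := by
  rw [mem_spectrum_iff_isRoot_charpoly, mem_spectrum_iff_isRoot_charpoly, charpoly_map,
    Polynomial.isRoot_map_iff (algebraMap K L).injective]

noncomputable def toComplexEuclideanCLM :
    Matrix n n ℝ →ₐ[ℝ] (EuclideanSpace ℂ n →L[ℂ] EuclideanSpace ℂ n) :=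
  ((toEuclideanCLM (n := n) (𝕜 := ℂ)).toAlgEquiv.restrictScalars ℝ).toAlgHom.comp
    (Algebra.ofId ℝ ℂ).mapMatrix

theorem toComplexEuclideanCLM_apply (M : Matrix n n ℝ) :
    toComplexEuclideanCLM M = toEuclideanCLM (n := n) (𝕜 := ℂ) (M.map (algebraMap ℝ ℂ)) :=
  rfl

theorem toComplexEuclideanCLM_transpose (M : Matrix n n ℝ) :
    toComplexEuclideanCLM Mᵀ = star (toComplexEuclideanCLM M) := by
  rw [toComplexEuclideanCLM_apply, toComplexEuclideanCLM_apply, ← map_star]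
  congr 1
  ext i j
  simp [star_apply]

theorem isClosedEmbedding_toComplexEuclideanCLM :
    IsClosedEmbedding (toComplexEuclideanCLM (n := n)) := by
  refine (toComplexEuclideanCLM (n := n)).toLinearMap.isClosedEmbedding_of_injective ?_
  rw [LinearMap.ker_eq_bot]
  exact (toEuclideanCLM (n := n) (𝕜 := ℂ)).injective.comp
    (map_injective (algebraMap ℝ ℂ).injective)

theorem spectrum_toComplexEuclideanCLM_eq_map (M : Matrix n n ℝ) :
    spectrum ℂ (toComplexEuclideanCLM M) = spectrum ℂ (M.map (algebraMap ℝ ℂ)) :=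
  AlgEquiv.spectrum_eq (toEuclideanCLM (n := n) (𝕜 := ℂ)).toAlgEquiv _

theorem spectrum_real_toComplexEuclideanCLM (M : Matrix n n ℝ) :
    spectrum ℝ (toComplexEuclideanCLM M) = spectrum ℝ M := by
  ext μ
  rw [← spectrum.algebraMap_mem_iff ℂ, spectrum_toComplexEuclideanCLM_eq_map,
    algebraMap_mem_spectrum_map]

theorem specRad_eq_spectralRadius_toComplexEuclideanCLM (M : Matrix n n ℝ) :
    specRad M = spectralRadius ℂ (toComplexEuclideanCLM M) := by
  rw [specRad, spectralRadius, spectralRadius, spectrum_toComplexEuclideanCLM_eq_map]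

theorem norm_toComplexEuclideanCLM_le (M : Matrix n n ℝ) : ‖toComplexEuclideanCLM M‖ ≤ ‖M‖ := by
  refine ContinuousLinearMap.opNorm_le_bound _ (norm_nonneg M) fun x ↦ ?_
  set re : EuclideanSpace ℂ n → EuclideanSpace ℝ n := fun y ↦ WithLp.toLp 2 fun i ↦ (y i).re
  set im : EuclideanSpace ℂ n → EuclideanSpace ℝ n := fun y ↦ WithLp.toLp 2 fun i ↦ (y i).im
  have hsq (y : EuclideanSpace ℂ n) : ‖y‖ ^ 2 = ‖re y‖ ^ 2 + ‖im y‖ ^ 2 := by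
    simp only [EuclideanSpace.norm_sq_eq, re, im, ← Finset.sum_add_distrib, Complex.sq_norm,
      Complex.normSq_apply, Real.norm_eq_abs, sq_abs]
    simp [sq]
  have hre : re (toComplexEuclideanCLM M x) = toEuclideanCLM (n := n) (𝕜 := ℝ) M (re x) := by
    ext i
    simp [re, toComplexEuclideanCLM_apply, mulVec, dotProduct, Complex.re_sum]
  have him : im (toComplexEuclideanCLM M x) = toEuclideanCLM (n := n) (𝕜 := ℝ) M (im x) := by
    ext i
    simp [im, toComplexEuclideanCLM_apply, mulVec, dotProduct, Complex.im_sum]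
  have hbound (y : EuclideanSpace ℝ n) : ‖toEuclideanCLM (n := n) (𝕜 := ℝ) M y‖ ≤ ‖M‖ * ‖y‖ :=
    (toEuclideanCLM (n := n) (𝕜 := ℝ) M).le_opNorm y
  refine le_of_sq_le_sq ?_ (by positivity)
  rw [hsq, hre, him, mul_pow, hsq, mul_add]
  gcongr ?_ + ?_ <;> rw [← mul_pow] <;> gcongr <;> exact hbound _

end Matrix

theorem hasSum_toComplexEuclideanCLM_lyap {n : ℕ} {M : Matrix (Fin n) (Fin n) ℝ}
    (hM : specRad M < 1) :
    HasSum (fun k ↦ star (toComplexEuclideanCLM M ^ k) * toComplexEuclideanCLM M ^ k)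
      (toComplexEuclideanCLM (lyap Mᵀ 1)) := by
  rw [specRad_eq_spectralRadius_toComplexEuclideanCLM] at hM
  have hterm : (fun k ↦ toComplexEuclideanCLM (Mᵀ ^ k * 1 * Mᵀᵀ ^ k)) =
      fun k ↦ star (toComplexEuclideanCLM M ^ k) * toComplexEuclideanCLM M ^ k := by
    funext k
    simp [toComplexEuclideanCLM_transpose, star_pow]
  -- `tsum` commutes with a closed embedding whether or not the real series is summable.
  rw [lyap, isClosedEmbedding_toComplexEuclideanCLM.map_tsum, hterm]
  exact (summable_star_pow_mul_pow hM).hasSum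

/-- Stability certificate for the Euclidean retraction: if `K` is stabilizing,
`lmax` is the largest eigenvalue of `P = L((A+BK)ᵀ, I)`, and
`0 ≤ η ≤ s := 1 / (2 lmax ‖BV‖₂)` (with `‖·‖` the ℓ²-operator/spectral norm;
the condition is stated multiplicatively as `η · (2 lmax ‖BV‖₂) ≤ 1`, which
also covers the convention `s = +∞` when `BV = 0`), then `K + ηV` is
stabilizing. -/
theorem stmt_10 {n m : ℕ} (A : Matrix (Fin n) (Fin n) ℝ)
    (B : Matrix (Fin n) (Fin m) ℝ) (K V : Matrix (Fin m) (Fin n) ℝ)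
    (hK : specRad (A + B * K) < 1)
    (lmax : ℝ) (hlmax : IsGreatest (spectrum ℝ (lyap (A + B * K)ᵀ 1)) lmax)
    (η : ℝ) (hη0 : 0 ≤ η) (hη : η * (2 * lmax * ‖B * V‖) ≤ 1) :
    specRad (A + B * (K + η • V)) < 1 := by
  set P := toComplexEuclideanCLM (lyap (A + B * K)ᵀ 1)
  have hP := hasSum_toComplexEuclideanCLM_lyap hK
  have hP0 : 0 ≤ P := hP.nonneg fun k ↦ star_mul_self_nonneg _
  have hspec : spectrum ℝ P = spectrum ℝ (lyap (A + B * K)ᵀ 1) :=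
    spectrum_real_toComplexEuclideanCLM _
  have hPle : P ≤ algebraMap ℝ _ lmax :=
    le_algebraMap_of_spectrum_le fun μ hμ ↦ hlmax.2 (hspec ▸ hμ)
  have hlmax0 : 0 ≤ lmax := spectrum_nonneg_of_nonneg hP0 (hspec ▸ hlmax.1)
  have hw : 2 * lmax * ‖η • toComplexEuclideanCLM (B * V)‖ ≤ 1 := by
    rw [norm_smul, Real.norm_of_nonneg hη0, mul_left_comm]
    exact le_trans (by gcongr; exact norm_toComplexEuclideanCLM_le _) hη
  rw [Matrix.mul_add, Matrix.mul_smul, ← add_assoc,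
    specRad_eq_spectralRadius_toComplexEuclideanCLM, map_add, map_smul]
  exact spectralRadius_add_lt_one_of_lyapunov hP0 (star_mul_mul_add_one_of_hasSum hP) hPle hw
end

section
/- The LQR cost J(K) = (1/2) tr((Q + KᵀRK) Y_K) with Y_K = L(A+BK, Σ) satisfies: if Σ ≻ 0, Q ⪰ 0, R ≻ 0, then J(K) ≥ (1/2)·λ_min(Σ)·tr(Q + KᵀRK) ≥ (1/2)·λ_min(Σ)·λ_min(R)·‖K‖_F², and hence J(K) → ∞ as ‖K‖_F → ∞ over stabilizing K. -/
/-!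
With `M = Q + KᵀRK ⪰ 0`, the series `Y_K = ∑ₖ Fᵏ W (Fᵀ)ᵏ` (`F = A + BK`, `W = Σ`) has positive
semidefinite terms, so `tr(M Y_K) ≥ tr(M W)`, its `k = 0` term; and `W ⪰ λmin(W) I` gives
`tr(M W) ≥ λmin(W) tr M`. Likewise `R ⪰ λmin(R) I` gives `tr(KᵀRK) ≥ λmin(R) tr(KᵀK)`, while
`tr Q ≥ 0`. The series converges because, by Gelfand's formula, `‖Fᵏ‖ ≤ rᵏ` eventually for any
`ρ(F) < r < 1`.
-/

open Matrix

open Filter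
open scoped MatrixOrder

theorem spectrum.eventually_norm_pow_le_of_spectralRadius_lt {A : Type*} [NormedRing A]
    [NormedAlgebra ℂ A] [CompleteSpace A] {a : A} {r : ℝ}
    (hr : spectralRadius ℂ a < ENNReal.ofReal r) : ∀ᶠ n : ℕ in atTop, ‖a ^ n‖ ≤ r ^ n := by
  filter_upwards [(pow_norm_pow_one_div_tendsto_nhds_spectralRadius a).eventually_lt_const hr,
    eventually_ne_atTop 0] with n hlt hn
  have hroot : ‖a ^ n‖ ^ (1 / n : ℝ) < r := ((ENNReal.ofReal_lt_ofReal_iff').mp hlt).1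
  calc ‖a ^ n‖ = (‖a ^ n‖ ^ (1 / n : ℝ)) ^ n := by
        rw [one_div, Real.rpow_inv_natCast_pow (norm_nonneg _) hn]
    _ ≤ r ^ n := pow_le_pow_left₀ (by positivity) hroot.le n

namespace Matrix

variable {ι : Type*} [Fintype ι]

section Frobenius

attribute [local instance] frobeniusSeminormedAddCommGroup frobeniusNormedRing
  frobeniusNormedSpace frobeniusNormedAlgebra

theorem summable_pow_mul_mul_transpose_pow [DecidableEq ι] {A : Matrix ι ι ℝ}
    (hA : specRad A < 1) (W : Matrix ι ι ℝ) :
    Summable fun k : ℕ => A ^ k * W * Aᵀ ^ k := by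
  obtain ⟨r, hr0, hρr, hr1⟩ := ENNReal.lt_iff_exists_real_btwn.mp hA
  replace hr1 : r < 1 := ENNReal.ofReal_lt_one.mp hr1
  have hnorm : ∀ k : ℕ, ‖A ^ k‖ = ‖(A.map (algebraMap ℝ ℂ)) ^ k‖ := fun k => by
    rw [← RingHom.mapMatrix_apply, ← map_pow, RingHom.mapMatrix_apply]
    exact (frobenius_norm_map_eq _ _ Complex.norm_real).symm
  refine Summable.of_norm_bounded_eventually
    ((summable_geometric_of_lt_one (by positivity) (by nlinarith : r ^ 2 < 1)).mul_left ‖W‖) ?_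
  rw [Nat.cofinite_eq_atTop]
  filter_upwards [spectrum.eventually_norm_pow_le_of_spectralRadius_lt hρr] with k hk
  rw [← hnorm] at hk
  calc ‖A ^ k * W * Aᵀ ^ k‖ ≤ ‖A ^ k‖ * ‖W‖ * ‖A ^ k‖ := by
        nth_rw 2 [← frobenius_norm_transpose (A ^ k)]
        rw [transpose_pow]
        exact (frobenius_norm_mul _ _).trans
          (mul_le_mul_of_nonneg_right (frobenius_norm_mul _ _) (norm_nonneg _))
    _ ≤ r ^ k * ‖W‖ * r ^ k := by gcongr
    _ = ‖W‖ * (r ^ 2) ^ k := by ring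

end Frobenius

theorem PosSemidef.trace_mul_nonneg {M P : Matrix ι ι ℝ} (hM : M.PosSemidef)
    (hP : P.PosSemidef) : 0 ≤ (M * P).trace := by
  classical
  obtain ⟨S, rfl⟩ := CStarAlgebra.nonneg_iff_eq_star_mul_self.mp hM.nonneg
  rw [← trace_mul_cycle]
  exact (hP.mul_mul_conjTranspose_same S).trace_nonneg

theorem PosSemidef.mul_trace_le_trace_mul [DecidableEq ι] {M P : Matrix ι ι ℝ}
    (hM : M.PosSemidef) (hP : P.IsHermitian) {c : ℝ} (hc : ∀ x ∈ spectrum ℝ P, c ≤ x) :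
    c * M.trace ≤ (M * P).trace := by
  have hcP : (P - algebraMap ℝ _ c).PosSemidef := algebraMap_le_of_le_spectrum hc hP
  have := hM.trace_mul_nonneg hcP
  rwa [Matrix.mul_sub, trace_sub, Algebra.algebraMap_eq_smul_one, mul_smul_comm, mul_one,
    trace_smul, smul_eq_mul, sub_nonneg] at this

theorem mul_trace_transpose_mul_self_le {m : Type*} [Fintype m] [DecidableEq m]
    {R : Matrix m m ℝ} (hR : R.IsHermitian) {c : ℝ} (hc : ∀ x ∈ spectrum ℝ R, c ≤ x)
    (K : Matrix m ι ℝ) : c * (Kᵀ * K).trace ≤ (Kᵀ * R * K).trace := by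
  rw [trace_mul_comm, trace_mul_cycle]
  simpa using (posSemidef_self_mul_conjTranspose K).mul_trace_le_trace_mul hR hc

theorem trace_mul_le_trace_mul_lyap {n : ℕ} {A W M : Matrix (Fin n) (Fin n) ℝ}
    (hW : W.PosSemidef) (hM : M.PosSemidef) (hA : Summable fun k : ℕ => A ^ k * W * Aᵀ ^ k) :
    (M * W).trace ≤ (M * lyap A W).trace := by
  have hsum : HasSum (fun k : ℕ => (M * (A ^ k * W * Aᵀ ^ k)).trace) (M * lyap A W).trace :=
    (hA.hasSum.mul_left M).map (traceLinearMap (Fin n) ℝ ℝ) continuous_id.matrix_trace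
  have hterm (k : ℕ) : (A ^ k * W * Aᵀ ^ k).PosSemidef := by
    simpa [transpose_pow] using hW.mul_mul_conjTranspose_same (A ^ k)
  simpa using le_hasSum hsum 0 fun k _ => hM.trace_mul_nonneg (hterm k)

end Matrix

/-- Coercivity bounds for the LQR cost `J(K) = ½ tr((Q + KᵀRK) Y_K)` with
`Y_K = L(A+BK, Σ)`: if `Σ ≻ 0`, `Q ⪰ 0`, `R ≻ 0`, with `λmin(Σ)`, `λmin(R)`
the smallest eigenvalues of `Σ` and `R`, then
`J(K) ≥ ½ λmin(Σ) tr(Q + KᵀRK) ≥ ½ λmin(Σ) λmin(R) ‖K‖_F²`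
(note `‖K‖_F² = tr(KᵀK)`), and hence `J(K) → ∞` as `‖K‖_F → ∞` over
stabilizing `K`. -/
theorem stmt_14 {n m : ℕ} (A : Matrix (Fin n) (Fin n) ℝ)
    (B : Matrix (Fin n) (Fin m) ℝ)
    (Q W : Matrix (Fin n) (Fin n) ℝ) (R : Matrix (Fin m) (Fin m) ℝ)
    (hW : W.PosDef) (hQ : Q.PosSemidef) (hR : R.PosDef)
    (lminS lminR : ℝ)
    (hlminS : IsLeast (spectrum ℝ W) lminS)
    (hlminR : IsLeast (spectrum ℝ R) lminR)
    (J : Matrix (Fin m) (Fin n) ℝ → ℝ)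
    (hJ : ∀ K, J K = (1 / 2) * (((Q + Kᵀ * R * K) * lyap (A + B * K) W).trace)) :
    (∀ K : Matrix (Fin m) (Fin n) ℝ, specRad (A + B * K) < 1 →
      (1 / 2) * lminS * (Q + Kᵀ * R * K).trace ≤ J K ∧
      (1 / 2) * lminS * lminR * (Kᵀ * K).trace ≤
        (1 / 2) * lminS * (Q + Kᵀ * R * K).trace) ∧
    (∀ c : ℝ, ∃ r : ℝ, ∀ K : Matrix (Fin m) (Fin n) ℝ,
      specRad (A + B * K) < 1 → r ≤ (Kᵀ * K).trace → c ≤ J K) := by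
  have hlminS_pos : 0 < lminS := (isStrictlyPositive_iff_posDef.mpr hW).spectrum_pos hlminS.1
  have hlminR_pos : 0 < lminR := (isStrictlyPositive_iff_posDef.mpr hR).spectrum_pos hlminR.1
  have bounds (K : Matrix (Fin m) (Fin n) ℝ) (hK : specRad (A + B * K) < 1) :
      (1 / 2) * lminS * (Q + Kᵀ * R * K).trace ≤ J K ∧
      (1 / 2) * lminS * lminR * (Kᵀ * K).trace ≤ (1 / 2) * lminS * (Q + Kᵀ * R * K).trace := by
    have hM : (Q + Kᵀ * R * K).PosSemidef := by
      simpa using hQ.add (hR.posSemidef.conjTranspose_mul_mul_same K)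
    have hYW := trace_mul_le_trace_mul_lyap hW.posSemidef hM
      (summable_pow_mul_mul_transpose_pow hK W)
    have hWS := hM.mul_trace_le_trace_mul hW.isHermitian hlminS.2
    have hKRK := mul_trace_transpose_mul_self_le hR.isHermitian hlminR.2 K
    have hQtr := hQ.trace_nonneg
    rw [hJ K]
    constructor
    · linarith
    · rw [trace_add]
      nlinarith
  refine ⟨bounds, fun c => ⟨c / ((1 / 2) * lminS * lminR), fun K hK hr => ?_⟩⟩
  have hc : c ≤ (1 / 2) * lminS * lminR * (Kᵀ * K).trace := by
    rwa [div_le_iff₀' (by positivity)] at hr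
  linarith [bounds K hK]
end
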